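/- arXiv:math/0401375 — 2 statements merged into one kernel-verified Lean document; each statement's English description precedes it below -/
import Mathlib

section
/- Let h : ℕ → ℕ satisfy h(0) = 1 and h(1) = 2, and set s_0 = inf{n : h(n) < n+1} ∈ ℕ ∪ {∞} (so h(n) = n+1 for all n < s_0). Then h is a Macaulay function of type 2 if and only if h is non-increasing on [s_0, ∞), i.e. h(m+1) ≤ h(m) for all m ≥ s_0. In that case s_0 = s_0(h). -/
open scoped BigOperators

/-- The largest `m` with `C(m, i) ≤ α` (for `i ≥ 1`, `α ≥ 1` this is the leading
exponent of the `i`-binomial development of `α`). -/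
noncomputable def lead (α i : ℕ) : ℕ := sSup {m : ℕ | Nat.choose m i ≤ α}

/-- `binUp i α = α^{<i>}`, defined through the `i`-binomial development of `α`:
if `α = C(m_i, i) + C(m_{i-1}, i-1) + ⋯ + C(m_j, j)` with
`m_i > m_{i-1} > ⋯ > m_j ≥ j ≥ 1`, then
`binUp i α = C(m_i+1, i+1) + C(m_{i-1}+1, i) + ⋯ + C(m_j+1, j+1)`, and `binUp i 0 = 0`. -/
noncomputable def binUp : ℕ → ℕ → ℕ
  | 0, _ => 0
  | (i+1), α =>
    if α = 0 then 0
    else Nat.choose (lead α (i+1) + 1) (i+2) +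
      binUp i (α - Nat.choose (lead α (i+1)) (i+1))

/-- `h : ℕ → ℕ` is a Macaulay function if `h 0 = 1` and `h (i+1) ≤ (h i)^{<i>}`
for every `i ≥ 1`. -/
def MacaulayFun (h : ℕ → ℕ) : Prop :=
  h 0 = 1 ∧ ∀ i, 1 ≤ i → h (i+1) ≤ binUp i (h i)

/-- `s₀(h) = inf {n | h n < C(a+n-1, n)} ∈ ℕ ∪ {∞}` for a Macaulay function of
type `a = h 1`. -/
noncomputable def s0M (h : ℕ → ℕ) : ℕ∞ :=
  sInf {x : ℕ∞ | ∃ n : ℕ, x = (n : ℕ∞) ∧ h n < Nat.choose (h 1 + n - 1) n}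

/-- `sup f = max {n | f n ≠ 0}` for a finitely supported `f : ℕ → ℕ`. -/
noncomputable def supN (f : ℕ → ℕ) : ℕ := sSup {n : ℕ | f n ≠ 0}

/-- A character: a finitely supported `γ : ℤ → ℤ` with `∑ γ(n) = 0`. -/
def IsChar (γ : ℤ → ℤ) : Prop :=
  (Function.support γ).Finite ∧ ∑ᶠ n, γ n = 0

/-- `s₀(γ) = inf {n ≥ 0 | γ n ≠ -1}`. -/
noncomputable def s0C (γ : ℤ → ℤ) : ℤ := sInf {n : ℤ | 0 ≤ n ∧ γ n ≠ -1}

/-- A positive character: `γ(n) = 0` for `n < 0`, `γ(0) = -1` and `γ(n) ≥ 0`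
for every `n ≥ s₀(γ)`. -/
def PosChar (γ : ℤ → ℤ) : Prop :=
  IsChar γ ∧ (∀ n < 0, γ n = 0) ∧ γ 0 = -1 ∧ ∀ n : ℤ, s0C γ ≤ n → 0 ≤ γ n

/-- `sup γ = max {n | γ n ≠ 0}` for a finitely supported `γ : ℤ → ℤ`. -/
noncomputable def supZ (γ : ℤ → ℤ) : ℤ := sSup {n : ℤ | γ n ≠ 0}

/-- `IsDev α i j m` says that `α = C(m_i, i) + C(m_{i-1}, i-1) + ⋯ + C(m_j, j)`
with `m_i > m_{i-1} > ⋯ > m_j ≥ j ≥ 1` is the `i`-binomial development of `α`. -/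
def IsDev (α i j : ℕ) (m : ℕ → ℕ) : Prop :=
  1 ≤ j ∧ j ≤ i ∧ j ≤ m j ∧ (∀ k, j ≤ k → k < i → m k < m (k+1)) ∧
    α = ∑ k ∈ Finset.Icc j i, Nat.choose (m k) k

/-! In type 2 the bound `C(1 + n, n) = n + 1` is the diagonal, and `α^{<i>} = α` as soon as
`α ≤ i`: once `h` has fallen weakly below the diagonal, the Macaulay condition says exactly
that `h` does not increase, while on the diagonal it allows one more step up, to `i + 2`. -/

lemma lead_eq_of_choose_le_of_lt {α i b : ℕ} (hb : Nat.choose b i ≤ α)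
    (hlt : α < Nat.choose (b + 1) i) : lead α i = b := by
  have hset : {m : ℕ | Nat.choose m i ≤ α} = Set.Iic b := by
    ext m
    refine ⟨fun hm => ?_, fun hm => (Nat.choose_le_choose i hm).trans hb⟩
    by_contra! hbm
    rw [Set.mem_Iic, not_le, ← Nat.succ_le_iff] at hbm
    exact (hlt.trans_le (Nat.choose_le_choose i hbm)).not_ge hm
  rw [lead, hset, csSup_Iic]

lemma lead_of_pos_of_le {α i : ℕ} (hα : 0 < α) (hαi : α ≤ i) : lead α i = i :=
  lead_eq_of_choose_le_of_lt (by rwa [Nat.choose_self])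
    (by rw [Nat.choose_succ_self_right]; omega)

lemma lead_succ_self {i : ℕ} (hi : 1 ≤ i) : lead (i + 1) i = i + 1 := by
  refine lead_eq_of_choose_le_of_lt (Nat.choose_succ_self_right i).le ?_
  obtain ⟨j, rfl⟩ : ∃ j, i = j + 1 := ⟨i - 1, by omega⟩
  have hpos : 0 < Nat.choose (j + 2) j := Nat.choose_pos (by omega)
  have hpascal : Nat.choose (j + 3) (j + 1) = Nat.choose (j + 2) j + (j + 2) := by
    rw [Nat.choose_succ_succ', Nat.choose_succ_self_right]
  show j + 2 < Nat.choose (j + 3) (j + 1)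
  omega

lemma binUp_zero (i : ℕ) : binUp i 0 = 0 := by
  cases i <;> simp [binUp]

lemma binUp_of_le {i α : ℕ} (hα : α ≤ i) : binUp i α = α := by
  induction i generalizing α with
  | zero => simp [Nat.le_zero.mp hα, binUp]
  | succ i ih =>
    rcases Nat.eq_zero_or_pos α with rfl | hpos
    · exact binUp_zero _
    · rw [binUp, if_neg hpos.ne', lead_of_pos_of_le hpos hα, Nat.choose_self, Nat.choose_self,
        ih (by omega)]
      omega

lemma binUp_succ_self {i : ℕ} (hi : 1 ≤ i) : binUp i (i + 1) = i + 2 := by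
  obtain ⟨j, rfl⟩ : ∃ j, i = j + 1 := ⟨i - 1, by omega⟩
  rw [binUp, if_neg (by omega), lead_succ_self hi, Nat.choose_succ_self_right,
    Nat.choose_succ_self_right, Nat.sub_self, binUp_zero]

lemma choose_two_add_sub_one (n : ℕ) : Nat.choose (2 + n - 1) n = n + 1 := by
  rw [show 2 + n - 1 = n + 1 by omega, Nat.choose_succ_self_right]

lemma sInf_coe_le_coe_iff {p : ℕ → Prop} {m : ℕ} :
    sInf {x : ℕ∞ | ∃ n : ℕ, x = n ∧ p n} ≤ m ↔ ∃ k ≤ m, p k := by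
  constructor
  · intro hle
    have hne : {x : ℕ∞ | ∃ n : ℕ, x = n ∧ p n}.Nonempty := by
      by_contra hemp
      rw [Set.not_nonempty_iff_eq_empty] at hemp
      rw [hemp, sInf_empty, top_le_iff] at hle
      exact ENat.natCast_ne_top m hle
    obtain ⟨k, hk, hpk⟩ := csInf_mem hne
    exact ⟨k, by exact_mod_cast hk ▸ hle, hpk⟩
  · rintro ⟨k, hkm, hk⟩
    have hSk : sInf {x : ℕ∞ | ∃ n : ℕ, x = n ∧ p n} ≤ k := sInf_le ⟨k, rfl, hk⟩
    exact hSk.trans (by exact_mod_cast hkm)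

section TypeTwo

variable {h : ℕ → ℕ}

lemma MacaulayFun.succ_le_of_le_self (hM : MacaulayFun h) {m : ℕ} (hm : 1 ≤ m)
    (hhm : h m ≤ m) : h (m + 1) ≤ h m :=
  binUp_of_le hhm ▸ hM.2 m hm

lemma MacaulayFun.le_self_of_le {k : ℕ} (hM : MacaulayFun h) (hk : 1 ≤ k) (hhk : h k ≤ k)
    {m : ℕ} (hkm : k ≤ m) : h m ≤ m := by
  induction m, hkm using Nat.le_induction with
  | base => exact hhk
  | succ m hkm ih => exact (hM.succ_le_of_le_self (hk.trans hkm) ih).trans (ih.trans m.le_succ)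

lemma MacaulayFun.succ_le_of_exists_lt_succ (hM : MacaulayFun h) {m : ℕ}
    (hdrop : ∃ k ≤ m, h k < k + 1) : h (m + 1) ≤ h m := by
  obtain ⟨k, hkm, hk⟩ := hdrop
  have hk1 : 1 ≤ k := Nat.pos_of_ne_zero fun hk0 => by simp [hk0, hM.1] at hk
  exact hM.succ_le_of_le_self (hk1.trans hkm) (hM.le_self_of_le hk1 (by omega) hkm)

lemma macaulayFun_of_succ_le_of_exists_lt_succ (h0 : h 0 = 1)
    (hdiag : ∀ n, (∀ k ≤ n, k + 1 ≤ h k) → h n = n + 1)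
    (hanti : ∀ m, (∃ k ≤ m, h k < k + 1) → h (m + 1) ≤ h m) : MacaulayFun h := by
  refine ⟨h0, fun i hi => ?_⟩
  by_cases hdrop : ∃ k ≤ i, h k < k + 1
  · obtain ⟨k, hki, hk⟩ := hdrop
    have hik : h i ≤ h k :=
      antitoneOn_nat_Ici_of_succ_le (fun m hkm => hanti m ⟨k, hkm, hk⟩) (le_refl k) hki hki
    rw [binUp_of_le (by omega)]
    exact hanti i ⟨k, hki, hk⟩
  · push Not at hdrop
    rw [hdiag i hdrop, binUp_succ_self hi]
    by_contra! hbig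
    have hdiag_succ := hdiag (i + 1) fun k hk => by
      rcases Nat.le_add_one_iff.mp hk with hki | rfl
      · exact hdrop k hki
      · omega
    omega

end TypeTwo

/-- Prop. 2.16, type 2: let `h 0 = 1`, `h 1 = 2`,
`S = inf {n | h n < n + 1} ∈ ℕ∞` and suppose `h n = n + 1` for `n < S`. Then
`h` is a Macaulay function of type 2 iff `h` is non-increasing on `[S, ∞)`;
and in that case `S = s₀(h)`. -/
theorem macaulay_type_two_iff (h : ℕ → ℕ) (h0 : h 0 = 1) (h1 : h 1 = 2)
    (S : ℕ∞) (hS : S = sInf {x : ℕ∞ | ∃ n : ℕ, x = (n : ℕ∞) ∧ h n < n + 1})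
    (hbelow : ∀ n : ℕ, (n : ℕ∞) < S → h n = n + 1) :
    ((MacaulayFun h ∧ h 1 = 2) ↔
      ∀ m : ℕ, S ≤ (m : ℕ∞) → h (m + 1) ≤ h m) ∧
    (MacaulayFun h → S = s0M h) := by
  have hS_le (m : ℕ) : S ≤ m ↔ ∃ k ≤ m, h k < k + 1 := hS ▸ sInf_coe_le_coe_iff
  have hdiag (n : ℕ) (hn : ∀ k ≤ n, k + 1 ≤ h k) : h n = n + 1 :=
    hbelow n <| lt_of_not_ge fun hSn => by
      obtain ⟨k, hkn, hk⟩ := (hS_le n).mp hSn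
      exact (hn k hkn).not_gt hk
  simp only [hS_le]
  refine ⟨⟨fun ⟨hM, _⟩ _ => hM.succ_le_of_exists_lt_succ,
    fun hanti => ⟨macaulayFun_of_succ_le_of_exists_lt_succ h0 hdiag hanti, h1⟩⟩, fun _ => ?_⟩
  simp only [hS, s0M, h1, choose_two_add_sub_one]
end

section
/- Let r ≥ 1 be an integer and let γ_0, …, γ_r be positive characters with sup γ_i < s_0(γ_{i-1}) for all 1 ≤ i ≤ r, and set γ = γ_0 + γ_1[-1] + ⋯ + γ_r[-r]. Then inf{n ≥ r+1 : γ(n) > -(r+1)} = s_0(γ_r) + r. -/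
open scoped BigOperators

/-
Each `γᵢ` equals `-1` on `[0, s₀(γᵢ))` and is `≥ -1` on `ℕ`. Since a positive character has
total mass `0`, it must be positive somewhere at or beyond `s₀`, so `s₀(γᵢ) ≤ sup γᵢ`; with
the gap condition the `s₀(γᵢ)` therefore drop by at least one at each step, i.e.
`s₀(γᵢ) ≥ s₀(γ_r) + (r - i)`. Hence for `r + 1 ≤ n < s₀(γ_r) + r` every summand `γᵢ(n - i)` is
`-1`, so `γ(n) = -(r+1)`, while at `n = s₀(γ_r) + r` the last summand is `≥ 0` and `γ(n) ≥ -r`.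
-/

open Finset

lemma bddBelow_s0C_set (γ : ℤ → ℤ) : BddBelow {n : ℤ | 0 ≤ n ∧ γ n ≠ -1} :=
  ⟨0, fun _ hx => hx.1⟩

lemma eq_neg_one_of_lt_s0C {γ : ℤ → ℤ} {n : ℤ} (h0 : 0 ≤ n) (hn : n < s0C γ) : γ n = -1 := by
  by_contra hne
  exact (csInf_le (bddBelow_s0C_set γ) ⟨h0, hne⟩ : s0C γ ≤ n).not_gt hn

namespace PosChar

variable {γ : ℤ → ℤ}

lemma s0C_mem (h : PosChar γ) : 0 ≤ s0C γ ∧ γ (s0C γ) ≠ -1 := by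
  obtain ⟨b, hb⟩ := h.1.1.bddAbove
  have hzero : γ (|b| + 1) = 0 := by
    by_contra hne
    have := hb hne
    have := le_abs_self b
    omega
  exact Int.csInf_mem (s := {n : ℤ | 0 ≤ n ∧ γ n ≠ -1})
    ⟨|b| + 1, by positivity, by simp [hzero]⟩ (bddBelow_s0C_set γ)

lemma one_le_s0C (h : PosChar γ) : 1 ≤ s0C γ := by
  obtain ⟨h0, hne⟩ := h.s0C_mem
  rcases h0.eq_or_lt with he | hl
  · exact absurd (he ▸ h.2.2.1) hne
  · omega

lemma neg_one_le (h : PosChar γ) {n : ℤ} (h0 : 0 ≤ n) : -1 ≤ γ n := by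
  rcases lt_or_ge n (s0C γ) with hl | hl
  · rw [eq_neg_one_of_lt_s0C h0 hl]
  · linarith [h.2.2.2 n hl]

lemma s0C_le_supZ (h : PosChar γ) : s0C γ ≤ supZ γ := by
  by_contra! hlt
  have hsupp : Function.support γ ⊆ ↑(Ico 0 (s0C γ)) := by
    intro x hx
    have hx_le : x ≤ supZ γ := le_csSup h.1.1.bddAbove hx
    have hx_nonneg : 0 ≤ x := by
      by_contra! hneg
      exact hx (h.2.1 x hneg)
    simp only [coe_Ico, Set.mem_Ico]
    omega
  have hmass : ∑ x ∈ Ico 0 (s0C γ), γ x = -s0C γ := by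
    rw [sum_congr rfl fun x hx => eq_neg_one_of_lt_s0C (mem_Ico.1 hx).1 (mem_Ico.1 hx).2,
      sum_const, Int.card_Ico, nsmul_eq_mul]
    simp [h.s0C_mem.1]
  have := h.one_le_s0C
  have := h.1.2
  rw [finsum_eq_sum_of_support_subset γ hsupp, hmass] at this
  omega

end PosChar

lemma add_sub_le_of_lt_pred {f : ℕ → ℤ} {r : ℕ} (hf : ∀ i, 1 ≤ i → i ≤ r → f i < f (i - 1))
    {i : ℕ} (hi : i ≤ r) : f r + (r - i : ℤ) ≤ f i := by
  induction hi using Nat.decreasingInduction with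
  | self => simp
  | of_succ k hk ih =>
    have := hf (k + 1) (by omega) hk
    simp only [Nat.add_sub_cancel, Nat.cast_add, Nat.cast_one] at this ih
    omega

section Decomposition

variable {r : ℕ} {Γ : ℕ → ℤ → ℤ}

lemma neg_le_sum_shift_at_s0C (hpos : ∀ i ≤ r, PosChar (Γ i)) :
    -(r : ℤ) ≤ ∑ i ∈ range (r + 1), Γ i (s0C (Γ r) + r - i) := by
  have hS := (hpos r le_rfl).one_le_s0C
  have hlast : 0 ≤ Γ r (s0C (Γ r) + r - r) := (hpos r le_rfl).2.2.2 _ (by simp)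
  have hrest : ∑ _i ∈ range r, (-1 : ℤ) ≤ ∑ i ∈ range r, Γ i (s0C (Γ r) + r - i) :=
    sum_le_sum fun i hi => (hpos i (mem_range.1 hi).le).neg_one_le (by
      have : (i : ℤ) < r := by exact_mod_cast mem_range.1 hi
      omega)
  rw [sum_range_succ]
  simp only [sum_const, card_range, nsmul_eq_mul, mul_neg, mul_one] at hrest
  omega

lemma sum_shift_eq_of_lt_s0C (hs0 : ∀ i ≤ r, s0C (Γ r) + (r - i : ℤ) ≤ s0C (Γ i)) {n : ℤ}
    (hn : (r : ℤ) + 1 ≤ n) (hn' : n < s0C (Γ r) + r) :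
    ∑ i ∈ range (r + 1), Γ i (n - i) = -((r : ℤ) + 1) := by
  have hterm : ∀ i ∈ range (r + 1), Γ i (n - i) = -1 := fun i hi => by
    have hir : i ≤ r := Nat.lt_succ_iff.1 (mem_range.1 hi)
    have : (i : ℤ) ≤ r := by exact_mod_cast hir
    have := hs0 i hir
    exact eq_neg_one_of_lt_s0C (by omega) (by omega)
  rw [sum_congr rfl hterm]
  simp

end Decomposition

theorem s1_of_decomposition_general (r : ℕ) (Γ : ℕ → ℤ → ℤ)
    (hpos : ∀ i ≤ r, PosChar (Γ i))
    (hgap : ∀ i, 1 ≤ i → i ≤ r → supZ (Γ i) < s0C (Γ (i - 1)))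
    (γ : ℤ → ℤ) (hγ : ∀ n : ℤ, γ n = ∑ i ∈ Finset.range (r + 1), Γ i (n - i)) :
    sInf {n : ℤ | (r : ℤ) + 1 ≤ n ∧ -((r : ℤ) + 1) < γ n} = s0C (Γ r) + r := by
  have hs0 : ∀ i ≤ r, s0C (Γ r) + (r - i : ℤ) ≤ s0C (Γ i) := fun i =>
    add_sub_le_of_lt_pred fun i hi hir =>
      ((hpos i hir).s0C_le_supZ).trans_lt (hgap i hi hir)
  have hS := (hpos r le_rfl).one_le_s0C
  refine IsLeast.csInf_eq ⟨⟨by omega, ?_⟩, fun n ⟨hn, hγn⟩ => ?_⟩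
  · rw [hγ]
    linarith [neg_le_sum_shift_at_s0C hpos]
  · by_contra! hlt
    rw [hγ, sum_shift_eq_of_lt_s0C hs0 hn hlt] at hγn
    exact hγn.false

/-- Cor. 3.7: for `γ = γ₀ + γ₁[-1] + ⋯ + γ_r[-r]` with
positive characters `γᵢ` satisfying `sup γᵢ < s₀(γ_{i-1})`, one has
`inf {n ≥ r+1 | γ(n) > -(r+1)} = s₀(γ_r) + r`. -/
theorem s1_of_decomposition (r : ℕ) (hr : 1 ≤ r) (Γ : ℕ → ℤ → ℤ)
    (hpos : ∀ i ≤ r, PosChar (Γ i))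
    (hgap : ∀ i, 1 ≤ i → i ≤ r → supZ (Γ i) < s0C (Γ (i - 1)))
    (γ : ℤ → ℤ) (hγ : ∀ n : ℤ, γ n = ∑ i ∈ Finset.range (r + 1), Γ i (n - i)) :
    sInf {n : ℤ | (r : ℤ) + 1 ≤ n ∧ -((r : ℤ) + 1) < γ n} = s0C (Γ r) + r :=
  s1_of_decomposition_general r Γ hpos hgap γ hγ
end
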